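/- Let A be a C*-algebra and let a, b ∈ A be positive elements such that b lies in the hereditary subalgebra closure(aAa) and b is Cuntz equivalent to a. Then for every t ∈ [0,1], the positive element (1−t)a + tb is Cuntz equivalent to a; in particular the segment t ↦ (1−t)a + tb is a path of positive elements of constant Cuntz class from a to b. -/

import Mathlib

open Filter Topology

section Defs

variable {A : Type*}

/-- Cuntz subequivalence: `a ≾ b` iff there is a sequence `vₙ` with `‖vₙ * b * vₙ* - a‖ → 0`. -/
def CuntzLE [NonUnitalCStarAlgebra A] (a b : A) : Prop :=
  ∃ v : ℕ → A, Tendsto (fun n => ‖v n * b * star (v n) - a‖) atTop (𝓝 0)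

/-- Cuntz equivalence: `a ∼ b` iff `a ≾ b` and `b ≾ a`. -/
def CuntzEquiv [NonUnitalCStarAlgebra A] (a b : A) : Prop :=
  CuntzLE a b ∧ CuntzLE b a

/-- A projection: a self-adjoint idempotent. -/
def IsProjection [Mul A] [Star A] (p : A) : Prop :=
  IsSelfAdjoint p ∧ p * p = p

/-- Murray–von Neumann equivalence of projections. -/
def MvNEquiv [Mul A] [Star A] (p q : A) : Prop :=
  ∃ v : A, star v * v = p ∧ v * star v = q

/-- The hereditary subalgebra generated by a positive element `a`: the closure of `a A a`. -/
def her [NonUnitalCStarAlgebra A] (a : A) : Set A :=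
  closure {x : A | ∃ y : A, x = a * y * a}

/-- A C*-algebra is simple if its only closed two-sided ideals are `⊥` and `⊤`. -/
def IsSimpleCStarAlgebra (A : Type*) [NonUnitalCStarAlgebra A] : Prop :=
  ∀ I : TwoSidedIdeal A, IsClosed (I : Set A) → I = ⊥ ∨ I = ⊤

/-- A unital C*-algebra is approximately divisible if for each `N ≥ 1` there is an
approximately central sequence of unital `*`-homomorphisms `M_N(ℂ) ⊕ M_{N+1}(ℂ) → A`. -/
def ApproximatelyDivisible (A : Type*) [CStarAlgebra A] : Prop :=
  ∀ N : ℕ, 0 < N →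
    ∃ φ : ℕ → (Matrix (Fin N) (Fin N) ℂ × Matrix (Fin (N + 1)) (Fin (N + 1)) ℂ) →⋆ₐ[ℂ] A,
      ∀ x c, Tendsto (fun n => ‖(φ n) x * c - c * (φ n) x‖) atTop (𝓝 (0 : ℝ))

/-- Real rank zero: every self-adjoint element is a norm limit of self-adjoint elements
with finite spectrum. -/
def RealRankZero (A : Type*) [CStarAlgebra A] : Prop :=
  ∀ a : A, IsSelfAdjoint a → ∀ ε : ℝ, 0 < ε →
    ∃ b : A, IsSelfAdjoint b ∧ (spectrum ℂ b).Finite ∧ ‖a - b‖ < ε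

/-- Stable finiteness: every isometry in every matrix algebra over `A` is a unitary. -/
def StablyFinite (A : Type*) [CStarAlgebra A] : Prop :=
  ∀ n : ℕ, ∀ v : Matrix (Fin n) (Fin n) A, star v * v = 1 → v * star v = 1

/-- A tracial state: a unital positive linear functional satisfying the trace identity. -/
def IsTracialState [CStarAlgebra A] (φ : A →ₗ[ℂ] ℂ) : Prop :=
  φ 1 = 1 ∧ (∀ x : A, ∃ r : ℝ, 0 ≤ r ∧ φ (star x * x) = (r : ℂ)) ∧
    ∀ x y : A, φ (x * y) = φ (y * x)

/-- The dimension function associated to a tracial state: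
`d_τ(a) = lim_{n → ∞} τ(a^{1/n})`. -/
noncomputable def dTau [CStarAlgebra A] (φ : A →ₗ[ℂ] ℂ) (a : A) : ℝ :=
  limUnder atTop (fun n : ℕ => (φ (cfc (fun t : ℝ => t ^ ((n : ℝ)⁻¹)) a)).re)

/-- Strict comparison of positive elements with respect to tracial states. -/
def StrictComparison (A : Type*) [CStarAlgebra A] [PartialOrder A] [StarOrderedRing A] : Prop :=
  ∀ a b : A, 0 ≤ a → 0 ≤ b →
    (∀ φ : A →ₗ[ℂ] ℂ, IsTracialState φ → dTau φ a < dTau φ b) → CuntzLE a b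

end Defs

/-!
The element `c = (1 - t) • a + t • b` lies in the hereditary subalgebra of `a`, and positive
elements of `her a` are Cuntz below `a`: if `a * yₙ * a → x` then
`(a yₙ* √a) a (a yₙ* √a)* = (a yₙ a)* (a yₙ a) → x* x`, and `x ≾ x²` for `x ≥ 0`.
Conversely `(1 - t) • a ≤ c`, and Rørdam's lemma turns this order relation into
`(1 - t) • a ≾ c`; rescaling gives `a ≾ c` for `t < 1`, while `t = 1` is the hypothesis `a ≾ b`.
-/

lemma abs_cube_div_sq_add_sub_le {ε s : ℝ} (hε : 0 < ε) (hs : 0 ≤ s) :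
    |s ^ 3 / (s ^ 2 + ε) - s| ≤ √ε := by
  obtain ⟨r, hr, rfl⟩ : ∃ r, 0 < r ∧ ε = r ^ 2 :=
    ⟨√ε, Real.sqrt_pos.2 hε, (Real.sq_sqrt hε.le).symm⟩
  have hd : 0 < s ^ 2 + r ^ 2 := by positivity
  rw [Real.sqrt_sq hr.le, show s ^ 3 / (s ^ 2 + r ^ 2) - s = -(r ^ 2 * s / (s ^ 2 + r ^ 2)) by
    field_simp; ring, abs_neg, abs_of_nonneg (by positivity), div_le_iff₀ hd]
  nlinarith [mul_nonneg hr.le (sq_nonneg (s - r)), mul_nonneg (mul_nonneg hr.le hr.le) hs]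

section Unital

variable {B : Type*} [CStarAlgebra B]

lemma cfc_mul_mul_cfc {z : B} (hz : IsSelfAdjoint z) {f g : ℝ → ℝ}
    (hf : ContinuousOn f (spectrum ℝ z)) (hg : ContinuousOn g (spectrum ℝ z)) :
    cfc f z * z * cfc g z = cfc (fun u => f u * u * g u) z := by
  rw [cfc_mul (fun u => f u * u) g z (hf.mul continuousOn_id) hg,
    cfc_mul f (fun u => u) z hf continuousOn_id, cfc_id' ℝ z hz]

variable [PartialOrder B] [StarOrderedRing B]

lemma norm_mul_star_sub_conj_le {s z : B} (hz : 0 ≤ z) (hsz : star s * s ≤ z) {ε : ℝ}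
    (hε : 0 < ε) :
    ‖s * star s - (s * cfc (fun u => (√(u + ε))⁻¹) z) * z
        * star (s * cfc (fun u => (√(u + ε))⁻¹) z)‖ ≤ ε := by
  have hpos : ∀ u ∈ spectrum ℝ z, 0 < u + ε := fun u hu => by
    linarith [spectrum_nonneg_of_nonneg hz hu]
  have hf : ContinuousOn (fun u => (√(u + ε))⁻¹) (spectrum ℝ z) :=
    ContinuousOn.inv₀ (by fun_prop) fun u hu => (Real.sqrt_pos.2 (hpos u hu)).ne'
  have hg : ContinuousOn (fun u => √(ε / (u + ε))) (spectrum ℝ z) :=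
    (continuousOn_const.div (by fun_prop) fun u hu => (hpos u hu).ne').sqrt
  -- With `Q = (z + ε)^(-1/2)` and `k = (ε / (z + ε))^(1/2)` the difference is `s k² s*`, and
  -- `‖s k² s*‖ = ‖k s* s k‖ ≤ ‖k z k‖ = ‖ε z / (z + ε)‖ ≤ ε`.
  set Q := cfc (fun u => (√(u + ε))⁻¹) z
  set k := cfc (fun u => √(ε / (u + ε))) z
  have hk : star k = k := IsSelfAdjoint.cfc.star_eq
  have hkk : k * k = 1 - Q * z * Q := by
    rw [← cfc_mul _ _ z hg hg, cfc_mul_mul_cfc hz.isSelfAdjoint hf hf, ← cfc_const_one ℝ z,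
      ← cfc_sub (fun _ => 1) (fun u => (√(u + ε))⁻¹ * u * (√(u + ε))⁻¹) z continuousOn_const
        ((hf.mul continuousOn_id).mul hf)]
    refine cfc_congr fun u hu => ?_
    have h := hpos u hu
    rw [Real.mul_self_sqrt (by positivity)]
    field_simp
    rw [Real.sq_sqrt h.le]
    ring
  have hkzk : ‖k * z * k‖ ≤ ε := by
    rw [cfc_mul_mul_cfc hz.isSelfAdjoint hg hg]
    refine norm_cfc_le hε.le fun u hu => ?_
    have h := hpos u hu
    have hu := spectrum_nonneg_of_nonneg hz hu
    rw [mul_right_comm, Real.mul_self_sqrt (by positivity), Real.norm_eq_abs,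
      abs_of_nonneg (by positivity), div_mul_eq_mul_div, div_le_iff₀ h]
    nlinarith
  calc _ = ‖star (k * star s) * (k * star s)‖ := by
        rw [star_mul, star_mul, star_star, hk, IsSelfAdjoint.cfc.star_eq]
        congr 1
        rw [show s * k * (k * star s) = s * (k * k) * star s by noncomm_ring, hkk]
        noncomm_ring
    _ = ‖k * star s * star (k * star s)‖ := by
        rw [CStarRing.norm_star_mul_self, CStarRing.norm_self_mul_star]
    _ ≤ ‖k * z * k‖ := by
        refine CStarAlgebra.norm_le_norm_of_nonneg_of_le (mul_star_self_nonneg _) ?_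
        simpa only [star_mul, star_star, hk, mul_assoc] using
          star_left_conjugate_le_conjugate hsz k
    _ ≤ ε := hkzk

end Unital

section NonUnital

variable {A : Type*} [NonUnitalCStarAlgebra A]

lemma cuntzLE_iff_mem_closure (a b : A) :
    CuntzLE a b ↔ a ∈ closure (Set.range fun v : A => v * b * star v) := by
  rw [mem_closure_iff_seq_limit]
  constructor
  · rintro ⟨v, hv⟩
    exact ⟨fun n => v n * b * star (v n), fun n => ⟨v n, rfl⟩,
      tendsto_iff_norm_sub_tendsto_zero.2 hv⟩
  · rintro ⟨x, hx, hlim⟩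
    choose v hv using hx
    refine ⟨v, ?_⟩
    simpa only [hv] using tendsto_iff_norm_sub_tendsto_zero.1 hlim

lemma CuntzLE.trans {a b c : A} (hab : CuntzLE a b) (hbc : CuntzLE b c) : CuntzLE a c := by
  rw [cuntzLE_iff_mem_closure] at hab hbc ⊢
  refine closure_minimal ?_ isClosed_closure hab
  rintro _ ⟨v, rfl⟩
  refine map_mem_closure (f := fun w => v * w * star v) (by fun_prop) hbc ?_
  rintro _ ⟨u, rfl⟩
  exact ⟨v * u, by simp only [star_mul, mul_assoc]⟩

lemma CuntzLE.smul_left {a b : A} (h : CuntzLE a b) {r : ℝ} (hr : 0 ≤ r) :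
    CuntzLE (r • a) b := by
  rw [cuntzLE_iff_mem_closure] at h ⊢
  refine map_mem_closure (continuous_const_smul r) h ?_
  rintro _ ⟨v, rfl⟩
  refine ⟨√r • v, ?_⟩
  simp only [star_smul, star_trivial, smul_mul_assoc, mul_smul_comm, smul_smul,
    Real.mul_self_sqrt hr]

lemma cfcₙ_mul_mul_cfcₙ (x : A) {f g : ℝ → ℝ} (hf : Continuous f) (hf0 : f 0 = 0)
    (hg : Continuous g) (hg0 : g 0 = 0) :
    cfcₙ f x * cfcₙ g x * cfcₙ f x = cfcₙ (fun u => f u * g u * f u) x := by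
  rw [cfcₙ_mul (fun u => f u * g u) f x (hf.mul hg).continuousOn (by simp [hf0])
    hf.continuousOn hf0, cfcₙ_mul f g x hf.continuousOn hf0 hg.continuousOn hg0]

lemma smul_add_smul_mem_her {a x y : A} (hx : x ∈ her a) (hy : y ∈ her a) (r s : ℝ) :
    r • x + s • y ∈ her a := by
  have hher : her a = ((LinearMap.mulLeftRight ℝ (a, a)).range.topologicalClosure : Set A) := by
    rw [Submodule.topologicalClosure_coe, LinearMap.coe_range, her]
    congr 1
    ext
    simp [eq_comm]
  rw [hher] at hx hy ⊢
  exact add_mem (Submodule.smul_mem _ r hx) (Submodule.smul_mem _ s hy)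

variable [PartialOrder A] [StarOrderedRing A]

lemma cuntzLE_mul_star_of_star_mul_le {s z : A} (hz : 0 ≤ z) (hsz : star s * s ≤ z) :
    CuntzLE (s * star s) z := by
  -- `Q n` lives in the unitization, but `s * Q n` lies in `A`.
  let Q : ℕ → Unitization ℂ A := fun n =>
    cfc (fun u => (√(u + 1 / (n + 1)))⁻¹) (z : Unitization ℂ A)
  have hv : ∀ n, (((s * Q n).snd : A) : Unitization ℂ A) = s * Q n :=
    fun n => Unitization.ext (by simp) rfl
  refine ⟨fun n => (s * Q n).snd,
    squeeze_zero (fun _ => norm_nonneg _) (fun n => ?_) tendsto_one_div_add_atTop_nhds_zero_nat⟩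
  rw [← norm_neg, neg_sub, ← Unitization.norm_inr (𝕜 := ℂ)]
  push_cast [hv n]
  refine norm_mul_star_sub_conj_le (Unitization.inr_nonneg_iff.2 hz) ?_ (by positivity)
  have := (Unitization.inr_le_iff (star s * s) z (.star_mul_self s) (.of_nonneg hz)).2 hsz
  simpa only [Unitization.inr_mul, Unitization.inr_star] using this

lemma cuntzLE_of_le {x z : A} (hx : 0 ≤ x) (hxz : x ≤ z) : CuntzLE x z := by
  have hsqrt : star (CFC.sqrt x) = CFC.sqrt x := (CFC.sqrt_nonneg x).isSelfAdjoint.star_eq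
  have h := cuntzLE_mul_star_of_star_mul_le (s := CFC.sqrt x) (hx.trans hxz)
    (by rwa [hsqrt, CFC.sqrt_mul_sqrt_self x hx])
  rwa [hsqrt, CFC.sqrt_mul_sqrt_self x hx] at h

lemma tendsto_cfcₙ_cube_div_sq_add {x : A} (hx : 0 ≤ x) :
    Tendsto (fun n : ℕ => cfcₙ (fun s : ℝ => s ^ 3 / (s ^ 2 + 1 / (n + 1))) x) atTop (𝓝 x) := by
  rw [tendsto_iff_norm_sub_tendsto_zero]
  refine squeeze_zero (fun _ => norm_nonneg _) (fun n => ?_)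
    ((Real.continuous_sqrt.tendsto' 0 0 Real.sqrt_zero).comp
      tendsto_one_div_add_atTop_nhds_zero_nat)
  have hε : (0 : ℝ) < 1 / (n + 1) := by positivity
  have hc : Continuous fun s : ℝ => s ^ 3 / (s ^ 2 + 1 / (n + 1)) :=
    (continuous_pow 3).div (by fun_prop) fun s => by positivity
  have hsub := cfcₙ_sub _ (fun s : ℝ => s) x hc.continuousOn (by simp) continuousOn_id
  rw [cfcₙ_id' ℝ x (.of_nonneg hx)] at hsub
  rw [← hsub]
  refine norm_cfcₙ_le fun s hs => ?_
  simpa [Real.norm_eq_abs] using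
    abs_cube_div_sq_add_sub_le hε (quasispectrum_nonneg_of_nonneg x hx s hs)

lemma cuntzLE_mul_self {x : A} (hx : 0 ≤ x) : CuntzLE x (x * x) := by
  rw [cuntzLE_iff_mem_closure]
  refine mem_closure_of_tendsto (tendsto_cfcₙ_cube_div_sq_add hx) (.of_forall fun n => ?_)
  have hε : (0 : ℝ) < 1 / (n + 1) := by positivity
  set g : ℝ → ℝ := fun s => √(s / (s ^ 2 + 1 / (n + 1)))
  have hg : Continuous g := (continuous_id.div (by fun_prop) fun s => by positivity).sqrt
  have hxx : x * x = cfcₙ (fun s : ℝ => s * s) x := by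
    rw [cfcₙ_mul (fun s : ℝ => s) (fun s : ℝ => s) x, cfcₙ_id' ℝ x (.of_nonneg hx)]
  refine ⟨cfcₙ g x, ?_⟩
  show cfcₙ g x * (x * x) * star (cfcₙ g x) = _
  rw [IsSelfAdjoint.cfcₙ.star_eq, hxx,
    cfcₙ_mul_mul_cfcₙ x hg (by simp [g]) (by fun_prop) (by simp)]
  refine cfcₙ_congr fun s hs => ?_
  have hs := quasispectrum_nonneg_of_nonneg x hx s hs
  rw [mul_right_comm, Real.mul_self_sqrt (by positivity)]
  ring

lemma mem_her_self {a : A} (ha : 0 ≤ a) : a ∈ her a := by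
  refine mem_closure_of_tendsto (tendsto_cfcₙ_cube_div_sq_add ha) (.of_forall fun n => ?_)
  have hε : (0 : ℝ) < 1 / (n + 1) := by positivity
  have h := cfcₙ_mul_mul_cfcₙ a (f := fun s => s) (g := fun s => s / (s ^ 2 + 1 / (n + 1)))
    continuous_id rfl (continuous_id.div (by fun_prop) fun s => by positivity) (by simp)
  rw [cfcₙ_id' ℝ a (.of_nonneg ha)] at h
  refine ⟨_, (cfcₙ_congr fun s _ => ?_).trans h.symm⟩
  ring

lemma star_mul_self_cuntzLE_of_mem_her {a x : A} (ha : 0 ≤ a) (hx : x ∈ her a) :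
    CuntzLE (star x * x) a := by
  rw [cuntzLE_iff_mem_closure]
  refine map_mem_closure (f := fun u => star u * u) (by fun_prop) hx ?_
  rintro _ ⟨y, rfl⟩
  have hsqrt : star (CFC.sqrt a) = CFC.sqrt a := (CFC.sqrt_nonneg a).isSelfAdjoint.star_eq
  have hmid : CFC.sqrt a * a * CFC.sqrt a = a * a := by
    nth_rewrite 2 [← CFC.sqrt_mul_sqrt_self a ha]
    rw [show CFC.sqrt a * (CFC.sqrt a * CFC.sqrt a) * CFC.sqrt a
      = CFC.sqrt a * CFC.sqrt a * (CFC.sqrt a * CFC.sqrt a) by noncomm_ring,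
      CFC.sqrt_mul_sqrt_self a ha]
  refine ⟨a * star y * CFC.sqrt a, ?_⟩
  calc _ = a * star y * (CFC.sqrt a * a * CFC.sqrt a) * y * a := by
        simp only [star_mul, star_star, hsqrt, (IsSelfAdjoint.of_nonneg ha).star_eq]
        noncomm_ring
    _ = star (a * y * a) * (a * y * a) := by
        rw [hmid]
        simp only [star_mul, (IsSelfAdjoint.of_nonneg ha).star_eq]
        noncomm_ring

lemma cuntzLE_of_mem_her {a x : A} (ha : 0 ≤ a) (hx : 0 ≤ x) (hmem : x ∈ her a) :
    CuntzLE x a := by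
  have h := star_mul_self_cuntzLE_of_mem_her ha hmem
  rw [(IsSelfAdjoint.of_nonneg hx).star_eq] at h
  exact (cuntzLE_mul_self hx).trans h

end NonUnital

/-- If `a`, `b` are positive, `b ∈ her(a)`, and `b ∼ a` (Cuntz), then every
point of the segment `t ↦ (1-t)•a + t•b`, `t ∈ [0,1]`, is positive and Cuntz equivalent
to `a`. -/
theorem segment_constant_cuntz_class {A : Type*} [NonUnitalCStarAlgebra A]
    [PartialOrder A] [StarOrderedRing A]
    (a b : A) (ha : 0 ≤ a) (hb : 0 ≤ b) (hmem : b ∈ her a) (heq : CuntzEquiv b a) :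
    ∀ t ∈ Set.Icc (0 : ℝ) 1,
      0 ≤ (1 - t) • a + t • b ∧ CuntzEquiv ((1 - t) • a + t • b) a := by
  rintro t ⟨ht0, ht1⟩
  have hta : 0 ≤ (1 - t) • a := smul_nonneg (sub_nonneg.2 ht1) ha
  have hc : 0 ≤ (1 - t) • a + t • b := add_nonneg hta (smul_nonneg ht0 hb)
  refine ⟨hc, cuntzLE_of_mem_her ha hc (smul_add_smul_mem_her (mem_her_self ha) hmem _ _), ?_⟩
  rcases ht1.lt_or_eq with ht1 | rfl
  · have h := (cuntzLE_of_le hta (le_add_of_nonneg_right (smul_nonneg ht0 hb))).smul_left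
      (inv_nonneg.2 (sub_nonneg.2 ht1.le))
    rwa [inv_smul_smul₀ (sub_ne_zero.2 ht1.ne')] at h
  · simpa using heq.2
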